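/- arXiv:2605.12881 — 4 statements merged into one kernel-verified Lean document; each statement's English description precedes it below -/
import Mathlib

section
/- Suppose (Θ̂₁,…,Θ̂_T) is a tuple of positive definite p×p real matrices that minimizes the GFlsL objective G over all tuples of positive definite p×p real matrices. Then there exist p×p real matrices Ẽ₁,…,Ẽ_T such that: Ẽ₁ = 0; for each 2 ≤ t ≤ T, if Θ̂_t ≠ Θ̂_{t−1} then Ẽ_t = (Θ̂_t − Θ̂_{t−1})/‖Θ̂_t − Θ̂_{t−1}‖_F, and if Θ̂_t = Θ̂_{t−1} then ‖Ẽ_t‖_F ≤ 1; and for every 1 ≤ t ≤ T, (1/T)·∑_{r=t}^{T} (Θ̂_r − X_r X_rᵀ) + λ·Ẽ_t = 0 (the p×p zero matrix). -/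
/-!
Perturbing `Θ̂_r` by `ε D` for every `r ≥ t` (with `D` symmetric and `ε` small, so that positive
definiteness is kept) changes the objective by `ε ⟪M_t, D⟫ + O(ε²)` plus the change of the single
fused term `λ ‖Θ̂_t - Θ̂_{t-1} + ε D‖`, where `M_t = (1/T) ∑_{r ≥ t} (Θ̂_r - X_r X_rᵀ)`.
Minimality then forces `M_1 = 0`, `M_t = -λ (Θ̂_t - Θ̂_{t-1}) / ‖Θ̂_t - Θ̂_{t-1}‖` at a jump and
`‖M_t‖ ≤ λ` elsewhere, so `Ẽ_t = -M_t / λ` works. Only the inner product behind the Frobenius norm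
enters, so the argument runs for signals in any real inner product space.
-/

open Matrix Finset

/-- Frobenius norm of a real `p × p` matrix. -/
noncomputable def frob {p : ℕ} (A : Matrix (Fin p) (Fin p) ℝ) : ℝ :=
  Real.sqrt (∑ u, ∑ v, (A u v) ^ 2)

/-- The Group Fused least-squares LASSO (GFlsL) objective, with time indices `t = 1, …, T`. -/
noncomputable def gflsl (p T : ℕ) (X : ℕ → Fin p → ℝ) (lam : ℝ)
    (Θ : ℕ → Matrix (Fin p) (Fin p) ℝ) : ℝ :=
  (1 / (2 * (T : ℝ))) *
      ∑ t ∈ Finset.Icc 1 T,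
        ((Θ t)ᵀ * Θ t - (Matrix.vecMulVec (X t) (X t))ᵀ * Θ t
          - (Θ t)ᵀ * Matrix.vecMulVec (X t) (X t)).trace
    + lam * ∑ t ∈ Finset.Icc 2 T, frob (Θ t - Θ (t - 1))

open scoped RealInnerProductSpace Topology
open Filter

lemma abs_le_of_eventually_nonneg {a b K : ℝ}
    (h : ∀ᶠ ε in 𝓝 (0 : ℝ), 0 ≤ ε * a + ε ^ 2 * b + |ε| * K) : |a| ≤ K := by
  have limit_nonneg : ∀ c q : ℝ, (∀ᶠ δ in 𝓝[>] (0 : ℝ), 0 ≤ δ * (c + δ * q)) → 0 ≤ c := by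
    intro c q hcq
    have hlim : Tendsto (fun δ : ℝ => c + δ * q) (𝓝[>] 0) (𝓝 c) :=
      ((continuous_const.add (continuous_id.mul continuous_const)).tendsto' 0 c
        (by simp)).mono_left nhdsWithin_le_nhds
    refine ge_of_tendsto hlim ?_
    filter_upwards [hcq, self_mem_nhdsWithin] with δ hδ hδpos
    exact nonneg_of_mul_nonneg_right hδ hδpos
  have hneg : Tendsto (fun δ : ℝ => -δ) (𝓝[>] 0) (𝓝 0) :=
    (continuous_neg.tendsto' 0 0 neg_zero).mono_left nhdsWithin_le_nhds
  have hright := limit_nonneg (a + K) b <| by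
    filter_upwards [nhdsWithin_le_nhds h, self_mem_nhdsWithin] with δ hδ (hδpos : 0 < δ)
    rw [abs_of_pos hδpos] at hδ
    linarith
  have hleft := limit_nonneg (K - a) b <| by
    filter_upwards [hneg.eventually h, self_mem_nhdsWithin] with δ hδ (hδpos : 0 < δ)
    rw [abs_neg, abs_of_pos hδpos] at hδ
    linarith
  exact abs_le.2 ⟨by linarith, by linarith⟩

section InnerProductSpace

variable {E : Type*} [NormedAddCommGroup E] [InnerProductSpace ℝ E]

lemma norm_add_smul_sub_norm_le {x : E} (hx : x ≠ 0) (y : E) (ε : ℝ) :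
    ‖x + ε • y‖ - ‖x‖ ≤ ε * (⟪x, y⟫ / ‖x‖) + ε ^ 2 * (‖y‖ ^ 2 / (2 * ‖x‖)) := by
  have hpos : 0 < ‖x‖ := norm_pos_iff.2 hx
  have hsq : ‖x + ε • y‖ ^ 2 = ‖x‖ ^ 2 + 2 * ε * ⟪x, y⟫ + ε ^ 2 * ‖y‖ ^ 2 := by
    rw [norm_add_sq_real, inner_smul_right, norm_smul, mul_pow, Real.norm_eq_abs, sq_abs]
    ring
  have amgm := two_mul_le_add_sq ‖x‖ ‖x + ε • y‖
  have hrhs : ε * (⟪x, y⟫ / ‖x‖) + ε ^ 2 * (‖y‖ ^ 2 / (2 * ‖x‖))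
      = (2 * ε * ⟪x, y⟫ + ε ^ 2 * ‖y‖ ^ 2) / (2 * ‖x‖) := by
    field_simp
  rw [hrhs, le_div_iff₀ (by positivity)]
  linarith

end InnerProductSpace

theorem Matrix.PosDef.eventually_add_smul {n : Type*} [Fintype n] {M D : Matrix n n ℝ}
    (hM : M.PosDef) (hD : D.IsHermitian) : ∀ᶠ ε in 𝓝 (0 : ℝ), (M + ε • D).PosDef := by
  have hsphere : ∀ᶠ ε in 𝓝 (0 : ℝ), ∀ x ∈ Metric.sphere (0 : EuclideanSpace ℝ n) 1,
      0 < x.ofLp ⬝ᵥ (M + ε • D) *ᵥ x.ofLp := by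
    refine (isCompact_sphere 0 1).eventually_forall_of_forall_eventually fun x hx => ?_
    have hcont : Continuous fun z : ℝ × EuclideanSpace ℝ n =>
        z.2.ofLp ⬝ᵥ (M + z.1 • D) *ᵥ z.2.ofLp := by fun_prop
    refine continuousAt_const.eventually_lt hcont.continuousAt ?_
    have hx0 : x.ofLp ≠ 0 := by
      simpa using ne_zero_of_mem_sphere one_ne_zero ⟨x, hx⟩
    simpa using hM.dotProduct_mulVec_pos hx0
  filter_upwards [hsphere] with ε hε
  refine .of_dotProduct_mulVec_pos (hM.isHermitian.add (hD.smul (.all ε))) fun y hy => ?_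
  set x : EuclideanSpace ℝ n := ‖WithLp.toLp 2 y‖⁻¹ • WithLp.toLp 2 y
  have hr : 0 < ‖WithLp.toLp 2 y‖ := by simpa using hy
  have hyx : y = ‖WithLp.toLp 2 y‖ • x.ofLp := by
    simp [x, smul_smul, hr.ne']
  have hx : x ∈ Metric.sphere 0 1 := by
    simp [x, norm_smul, hr.ne']
  rw [star_trivial, hyx, smul_dotProduct, mulVec_smul, dotProduct_smul, smul_smul, smul_eq_mul]
  exact mul_pos (by positivity) (hε x hx)

def Matrix.frobeniusEquiv {m n : Type*} : Matrix m n ℝ ≃ₗ[ℝ] EuclideanSpace ℝ (m × n) :=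
  (LinearEquiv.curry ℝ ℝ m n).symm.trans (WithLp.linearEquiv 2 ℝ (m × n → ℝ)).symm

@[simp]
lemma Matrix.frobeniusEquiv_apply {m n : Type*} (A : Matrix m n ℝ) (ij : m × n) :
    frobeniusEquiv A ij = A ij.1 ij.2 :=
  rfl

lemma Matrix.trace_transpose_mul_eq_inner {m n : Type*} [Fintype m] [Fintype n]
    (A B : Matrix m n ℝ) : (Aᵀ * B).trace = ⟪frobeniusEquiv A, frobeniusEquiv B⟫ := by
  simp only [trace, diag_apply, mul_apply, transpose_apply, PiLp.inner_apply,
    frobeniusEquiv_apply, RCLike.inner_apply, Real.ringHom_apply, mul_comm, Fintype.sum_prod_type]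
  exact sum_comm

lemma frob_eq_norm_frobeniusEquiv {p : ℕ} (A : Matrix (Fin p) (Fin p) ℝ) :
    frob A = ‖frobeniusEquiv A‖ := by
  simp [frob, EuclideanSpace.norm_eq, Fintype.sum_prod_type]

def addFrom {α : Type*} [Add α] (θ : ℕ → α) (t : ℕ) (d : α) : ℕ → α :=
  fun r => if t ≤ r then θ r + d else θ r

lemma map_addFrom {α β F : Type*} [Add α] [Add β] [FunLike F α β] [AddHomClass F α β] (f : F)
    (θ : ℕ → α) (t : ℕ) (d : α) :
    (fun r => f (addFrom θ t d r)) = addFrom (fun r => f (θ r)) t (f d) := by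
  funext r
  unfold addFrom
  split_ifs <;> simp

lemma sum_totalVariation_addFrom {E : Type*} [SeminormedAddCommGroup E] {T : ℕ} (θ : ℕ → E)
    (t : ℕ) (d : E) :
    ∑ r ∈ Icc 2 T, ‖addFrom θ t d r - addFrom θ t d (r - 1)‖
      = ∑ r ∈ Icc 2 T, ‖θ r - θ (r - 1)‖
        + if t ∈ Icc 2 T then ‖θ t - θ (t - 1) + d‖ - ‖θ t - θ (t - 1)‖ else 0 := by
  have hterm : ∀ r ∈ Icc 2 T, ‖addFrom θ t d r - addFrom θ t d (r - 1)‖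
      = ‖θ r - θ (r - 1)‖
        + if r = t then ‖θ t - θ (t - 1) + d‖ - ‖θ t - θ (t - 1)‖ else 0 := by
    intro r hr
    have hr2 := (mem_Icc.1 hr).1
    unfold addFrom
    by_cases hrt : r = t
    · subst hrt
      rw [if_pos le_rfl, if_neg (by omega), if_pos rfl, add_sub_right_comm]
      ring
    · rw [if_neg hrt, add_zero]
      split_ifs <;> first | omega | rw [add_sub_add_right_eq_sub] | rfl
  rw [sum_congr rfl hterm, sum_add_distrib, sum_ite_eq']

section FusedObjective

variable {E : Type*} [NormedAddCommGroup E] [InnerProductSpace ℝ E] (T : ℕ) (s : ℕ → E) (lam : ℝ)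

noncomputable def fusedObjective (θ : ℕ → E) : ℝ :=
  (1 / (2 * (T : ℝ))) * ∑ t ∈ Icc 1 T, (‖θ t‖ ^ 2 - 2 * ⟪s t, θ t⟫)
    + lam * ∑ t ∈ Icc 2 T, ‖θ t - θ (t - 1)‖

noncomputable def tailResidual (θ : ℕ → E) (t : ℕ) : E :=
  (1 / (T : ℝ)) • ∑ r ∈ Icc t T, (θ r - s r)

variable {T : ℕ} {s : ℕ → E} {lam : ℝ}

lemma sum_fidelity_addFrom (θ : ℕ → E) {t : ℕ} (ht : 1 ≤ t) (d : E) :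
    ∑ r ∈ Icc 1 T, (‖addFrom θ t d r‖ ^ 2 - 2 * ⟪s r, addFrom θ t d r⟫)
      = ∑ r ∈ Icc 1 T, (‖θ r‖ ^ 2 - 2 * ⟪s r, θ r⟫)
        + ∑ r ∈ Icc t T, (2 * ⟪θ r - s r, d⟫ + ‖d‖ ^ 2) := by
  have hterm : ∀ r, ‖addFrom θ t d r‖ ^ 2 - 2 * ⟪s r, addFrom θ t d r⟫
      = ‖θ r‖ ^ 2 - 2 * ⟪s r, θ r⟫ + if t ≤ r then 2 * ⟪θ r - s r, d⟫ + ‖d‖ ^ 2 else 0 := by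
    intro r
    unfold addFrom
    split_ifs
    · rw [norm_add_sq_real, inner_add_right, inner_sub_left]
      ring
    · ring
  have hfilter : (Icc 1 T).filter (t ≤ ·) = Icc t T := by
    ext r
    simp only [mem_filter, mem_Icc]
    omega
  rw [sum_congr rfl fun r _ => hterm r, sum_add_distrib, ← sum_filter, hfilter]

lemma fusedObjective_addFrom (θ : ℕ → E) {t : ℕ} (ht : t ∈ Icc 1 T) (d : E) :
    fusedObjective T s lam (addFrom θ t d)
      = fusedObjective T s lam θ + ⟪tailResidual T s θ t, d⟫
        + (#(Icc t T) / (2 * T)) * ‖d‖ ^ 2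
        + lam * if t ∈ Icc 2 T then ‖θ t - θ (t - 1) + d‖ - ‖θ t - θ (t - 1)‖ else 0 := by
  obtain ⟨ht1, htT⟩ := mem_Icc.1 ht
  have hT : (T : ℝ) ≠ 0 := Nat.cast_ne_zero.2 (by omega)
  unfold fusedObjective tailResidual
  rw [sum_fidelity_addFrom θ ht1, sum_totalVariation_addFrom, sum_add_distrib, ← mul_sum,
    sum_const, nsmul_eq_mul, real_inner_smul_left, sum_inner]
  field_simp
  ring

section FirstVariation

variable {θ : ℕ → E} {t : ℕ} {d : E}
  (hmin : ∀ᶠ ε in 𝓝 (0 : ℝ),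
    fusedObjective T s lam θ ≤ fusedObjective T s lam (addFrom θ t (ε • d)))
include hmin

lemma eventually_firstVariation_nonneg (ht : t ∈ Icc 1 T) :
    ∀ᶠ ε in 𝓝 (0 : ℝ), 0 ≤ ε * ⟪tailResidual T s θ t, d⟫
      + ε ^ 2 * (#(Icc t T) / (2 * T) * ‖d‖ ^ 2)
      + lam * if t ∈ Icc 2 T then ‖θ t - θ (t - 1) + ε • d‖ - ‖θ t - θ (t - 1)‖ else 0 := by
  filter_upwards [hmin] with ε hε
  rw [fusedObjective_addFrom θ ht, inner_smul_right, norm_smul, mul_pow, Real.norm_eq_abs,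
    sq_abs] at hε
  linarith

lemma inner_tailResidual_eq_zero (ht : t ∈ Icc 1 T) (ht2 : t ∉ Icc 2 T) :
    ⟪tailResidual T s θ t, d⟫ = 0 := by
  refine abs_nonpos_iff.1 (abs_le_of_eventually_nonneg (b := #(Icc t T) / (2 * T) * ‖d‖ ^ 2) ?_)
  filter_upwards [eventually_firstVariation_nonneg hmin ht] with ε hε
  rw [if_neg ht2] at hε
  linarith

lemma inner_tailResidual_add_smul_eq_zero (hlam : 0 ≤ lam) (ht : t ∈ Icc 2 T)
    (hjump : θ t - θ (t - 1) ≠ 0) :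
    ⟪tailResidual T s θ t + (lam / ‖θ t - θ (t - 1)‖) • (θ t - θ (t - 1)), d⟫ = 0 := by
  have ht1 : t ∈ Icc 1 T := Icc_subset_Icc_left (by norm_num) ht
  refine abs_nonpos_iff.1 (abs_le_of_eventually_nonneg
    (b := #(Icc t T) / (2 * T) * ‖d‖ ^ 2 + lam * (‖d‖ ^ 2 / (2 * ‖θ t - θ (t - 1)‖))) ?_)
  filter_upwards [eventually_firstVariation_nonneg hmin ht1] with ε hε
  rw [if_pos ht] at hε
  set Δ := θ t - θ (t - 1)
  have hbound := mul_le_mul_of_nonneg_left (norm_add_smul_sub_norm_le hjump d ε) hlam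
  have hcoef : lam / ‖Δ‖ * ⟪Δ, d⟫ = lam * (⟪Δ, d⟫ / ‖Δ‖) := by ring
  rw [inner_add_left, real_inner_smul_left, hcoef]
  linarith

lemma abs_inner_tailResidual_le (ht : t ∈ Icc 2 T) (hjump : θ t = θ (t - 1)) :
    |⟪tailResidual T s θ t, d⟫| ≤ lam * ‖d‖ := by
  have ht1 : t ∈ Icc 1 T := Icc_subset_Icc_left (by norm_num) ht
  refine abs_le_of_eventually_nonneg (b := #(Icc t T) / (2 * T) * ‖d‖ ^ 2) ?_
  filter_upwards [eventually_firstVariation_nonneg hmin ht1] with ε hε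
  rw [if_pos ht, hjump, sub_self, zero_add, norm_zero, sub_zero, norm_smul,
    Real.norm_eq_abs] at hε
  linarith

end FirstVariation

theorem fusedObjective_optimality {θ : ℕ → E} (hT : 1 ≤ T) (hlam : 0 < lam) (V : Submodule ℝ E)
    (hθV : ∀ t ∈ Icc 1 T, θ t ∈ V) (hsV : ∀ t ∈ Icc 1 T, s t ∈ V)
    (hmin : ∀ t ∈ Icc 1 T, ∀ d ∈ V, ∀ᶠ ε in 𝓝 (0 : ℝ),
      fusedObjective T s lam θ ≤ fusedObjective T s lam (addFrom θ t (ε • d))) :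
    ∃ e : ℕ → E, e 1 = 0 ∧
      (∀ t ∈ Icc 2 T,
        (θ t ≠ θ (t - 1) → e t = ‖θ t - θ (t - 1)‖⁻¹ • (θ t - θ (t - 1))) ∧
        (θ t = θ (t - 1) → ‖e t‖ ≤ 1)) ∧
      ∀ t ∈ Icc 1 T, tailResidual T s θ t + lam • e t = 0 := by
  have hresV : ∀ t ∈ Icc 1 T, tailResidual T s θ t ∈ V := fun t ht =>
    V.smul_mem _ <| V.sum_mem fun r hr =>
      V.sub_mem (hθV r (Icc_subset_Icc_left (mem_Icc.1 ht).1 hr))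
        (hsV r (Icc_subset_Icc_left (mem_Icc.1 ht).1 hr))
  have hjumpV : ∀ t ∈ Icc 2 T, θ t - θ (t - 1) ∈ V := fun t ht =>
    V.sub_mem (hθV t (Icc_subset_Icc_left (by norm_num) ht))
      (hθV (t - 1) (mem_Icc.2 ⟨by grind, by grind⟩))
  refine ⟨fun t => (-lam⁻¹) • tailResidual T s θ t, ?_, fun t ht => ⟨fun hne => ?_, fun heq => ?_⟩,
    fun t _ => by simp [smul_smul, hlam.ne']⟩
  · have h1 : 1 ∈ Icc 1 T := mem_Icc.2 ⟨le_rfl, hT⟩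
    have h0 := inner_tailResidual_eq_zero (hmin 1 h1 _ (hresV 1 h1)) h1 (by simp)
    simp [inner_self_eq_zero.1 h0]
  · have hΔ : θ t - θ (t - 1) ≠ 0 := sub_ne_zero.2 hne
    have ht1 : t ∈ Icc 1 T := Icc_subset_Icc_left (by norm_num) ht
    have h0 := inner_tailResidual_add_smul_eq_zero (hmin t ht1 _ (V.add_mem (hresV t ht1)
      (V.smul_mem (lam / ‖θ t - θ (t - 1)‖) (hjumpV t ht)))) hlam.le ht hΔ
    rw [inner_self_eq_zero, add_eq_zero_iff_eq_neg] at h0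
    dsimp only
    rw [h0, smul_neg, neg_smul, neg_neg, smul_smul]
    congr 1
    field_simp
  · have ht1 : t ∈ Icc 1 T := Icc_subset_Icc_left (by norm_num) ht
    have h := abs_inner_tailResidual_le (hmin t ht1 _ (hresV t ht1)) ht heq
    rw [real_inner_self_eq_norm_sq, abs_sq] at h
    rw [norm_smul, norm_neg, norm_inv, Real.norm_of_nonneg hlam.le, inv_mul_le_iff₀ hlam, mul_one]
    nlinarith [norm_nonneg (tailResidual T s θ t)]

end FusedObjective

lemma gflsl_eq_fusedObjective (p T : ℕ) (X : ℕ → Fin p → ℝ) (lam : ℝ)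
    (Θ : ℕ → Matrix (Fin p) (Fin p) ℝ) :
    gflsl p T X lam Θ = fusedObjective T (fun t => frobeniusEquiv (vecMulVec (X t) (X t))) lam
      (fun t => frobeniusEquiv (Θ t)) := by
  unfold gflsl fusedObjective
  simp only [trace_sub, trace_transpose_mul_eq_inner, frob_eq_norm_frobeniusEquiv, map_sub,
    real_inner_self_eq_norm_sq]
  congr 2
  refine sum_congr rfl fun t _ => ?_
  rw [real_inner_comm (frobeniusEquiv (Θ t))]
  ring

lemma eventually_posDef_addFrom {n : Type*} [Fintype n] {T : ℕ} {Θ : ℕ → Matrix n n ℝ}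
    (hPD : ∀ t ∈ Icc 1 T, (Θ t).PosDef) (t : ℕ) {D : Matrix n n ℝ} (hD : D.IsHermitian) :
    ∀ᶠ ε in 𝓝 (0 : ℝ), ∀ r ∈ Icc 1 T, (addFrom Θ t (ε • D) r).PosDef := by
  refine (eventually_all_finset _).2 fun r hr => ?_
  unfold addFrom
  split_ifs
  · exact (hPD r hr).eventually_add_smul hD
  · exact .of_forall fun _ => hPD r hr

theorem stmt0_general (p T : ℕ) (hT : 1 ≤ T)
    (X : ℕ → Fin p → ℝ) (lam : ℝ) (hlam : 0 < lam)
    (Θhat : ℕ → Matrix (Fin p) (Fin p) ℝ)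
    (hPD : ∀ t ∈ Finset.Icc 1 T, (Θhat t).PosDef)
    (hmin : ∀ Θ : ℕ → Matrix (Fin p) (Fin p) ℝ,
      (∀ t ∈ Finset.Icc 1 T, (Θ t).PosDef) →
      gflsl p T X lam Θhat ≤ gflsl p T X lam Θ) :
    ∃ E : ℕ → Matrix (Fin p) (Fin p) ℝ,
      E 1 = 0 ∧
      (∀ t ∈ Finset.Icc 2 T,
        (Θhat t ≠ Θhat (t - 1) →
          E t = (frob (Θhat t - Θhat (t - 1)))⁻¹ • (Θhat t - Θhat (t - 1))) ∧
        (Θhat t = Θhat (t - 1) → frob (E t) ≤ 1)) ∧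
      (∀ t ∈ Finset.Icc 1 T,
        (1 / (T : ℝ)) • (∑ r ∈ Finset.Icc t T,
            (Θhat r - Matrix.vecMulVec (X r) (X r))) + lam • E t = 0) := by
  -- Only symmetric directions keep `Θ̂` positive definite; the residuals are symmetric too.
  let V := (selfAdjoint.submodule ℝ (Matrix (Fin p) (Fin p) ℝ)).map frobeniusEquiv.toLinearMap
  obtain ⟨e, he1, hjump, hstat⟩ := fusedObjective_optimality (θ := fun t => frobeniusEquiv (Θhat t))
    hT hlam V (fun t ht => ⟨Θhat t, (hPD t ht).isHermitian.isSelfAdjoint, rfl⟩)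
    (fun t _ => ⟨vecMulVec (X t) (X t), show IsSelfAdjoint _ by
      simpa using (posSemidef_vecMulVec_self_star (X t)).isHermitian.isSelfAdjoint, rfl⟩)
    (by
      rintro t - _ ⟨D, hD, rfl⟩
      filter_upwards [eventually_posDef_addFrom hPD t (IsSelfAdjoint.isHermitian hD)] with ε hε
      simpa [gflsl_eq_fusedObjective, map_addFrom] using hmin _ hε)
  refine ⟨fun t => frobeniusEquiv.symm (e t), by simp [he1],
    fun t ht => ⟨fun hne => ?_, fun heq => ?_⟩, fun t ht => frobeniusEquiv.injective ?_⟩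
  · apply frobeniusEquiv.injective
    simpa [frob_eq_norm_frobeniusEquiv] using (hjump t ht).1 (frobeniusEquiv.injective.ne hne)
  · simpa [frob_eq_norm_frobeniusEquiv] using (hjump t ht).2 (congrArg frobeniusEquiv heq)
  · simpa [tailResidual, map_sum] using hstat t ht

/-- any minimizer of the GFlsL objective over positive definite tuples
satisfies the stated subgradient (KKT) conditions. -/
theorem stmt0 (p T : ℕ) (hp : 1 ≤ p) (hT : 1 ≤ T)
    (X : ℕ → Fin p → ℝ) (lam : ℝ) (hlam : 0 < lam)
    (Θhat : ℕ → Matrix (Fin p) (Fin p) ℝ)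
    (hPD : ∀ t ∈ Finset.Icc 1 T, (Θhat t).PosDef)
    (hmin : ∀ Θ : ℕ → Matrix (Fin p) (Fin p) ℝ,
      (∀ t ∈ Finset.Icc 1 T, (Θ t).PosDef) →
      gflsl p T X lam Θhat ≤ gflsl p T X lam Θ) :
    ∃ E : ℕ → Matrix (Fin p) (Fin p) ℝ,
      E 1 = 0 ∧
      (∀ t ∈ Finset.Icc 2 T,
        (Θhat t ≠ Θhat (t - 1) →
          E t = (frob (Θhat t - Θhat (t - 1)))⁻¹ • (Θhat t - Θhat (t - 1))) ∧
        (Θhat t = Θhat (t - 1) → frob (E t) ≤ 1)) ∧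
      (∀ t ∈ Finset.Icc 1 T,
        (1 / (T : ℝ)) • (∑ r ∈ Finset.Icc t T,
            (Θhat r - Matrix.vecMulVec (X r) (X r))) + lam • E t = 0) :=
  stmt0_general p T hT X lam hlam Θhat hPD hmin
end

section
/- Suppose (Θ̂₁,…,Θ̂_T) is a tuple of positive definite p×p real matrices that minimizes the GFlsL objective G over all tuples of positive definite p×p real matrices. Then ∑_{t=1}^{T} Θ̂_t = ∑_{t=1}^{T} X_t X_tᵀ; in particular the GFlsL estimator preserves the aggregate sample second moment. -/
/-!
Shifting every `Θ_t` by one common matrix leaves the fused penalty unchanged, so only the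
least-squares part of the objective sees such a shift. Its gradient in a common direction is
`M = ∑ₜ (Θ̂_t - X_t X_tᵀ)`; moving all `Θ̂_t` a small step `δ` against `M` changes the objective
by `-δ (2 - T δ) / (2T) · ‖M‖_F²`. Positive definiteness is an open condition, so small steps
stay admissible, and minimality forces `M = 0`.
-/

open Matrix Finset

open Filter Topology

theorem Matrix.PosDef.eventually_posDef {n : Type*} [Fintype n] {A : Matrix n n ℝ}
    (hA : A.PosDef) : ∀ᶠ B in 𝓝 A, B.IsHermitian → B.PosDef := by
  have hsphere : ∀ x ∈ Metric.sphere (0 : n → ℝ) 1,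
      ∀ᶠ z : Matrix n n ℝ × (n → ℝ) in 𝓝 (A, x), 0 < z.2 ⬝ᵥ (z.1 *ᵥ z.2) := by
    intro x hx
    have hquad : Continuous fun z : Matrix n n ℝ × (n → ℝ) => z.2 ⬝ᵥ (z.1 *ᵥ z.2) :=
      continuous_snd.dotProduct (continuous_fst.matrix_mulVec continuous_snd)
    have hpos := hA.dotProduct_mulVec_pos (Metric.ne_of_mem_sphere hx one_ne_zero)
    rw [star_trivial] at hpos
    exact hquad.continuousAt.eventually (lt_mem_nhds hpos)
  filter_upwards [(isCompact_sphere _ _).eventually_forall_of_forall_eventually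
    (P := fun B x => 0 < x ⬝ᵥ (B *ᵥ x)) hsphere] with B hB hBh
  refine .of_dotProduct_mulVec_pos hBh fun x hx => ?_
  have hnorm : 0 < ‖x‖ := norm_pos_iff.2 hx
  have hunit := hB (‖x‖⁻¹ • x) (by simp [norm_smul, hnorm.ne'])
  simp only [mulVec_smul, dotProduct_smul, smul_dotProduct, smul_eq_mul] at hunit
  rw [star_trivial]
  exact pos_of_mul_pos_right (pos_of_mul_pos_right hunit (by positivity)) (by positivity)

theorem Matrix.eventually_forall_posDef_sub_smul {ι n : Type*} [Fintype n] {s : Finset ι}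
    {A : ι → Matrix n n ℝ} (hA : ∀ i ∈ s, (A i).PosDef) {M : Matrix n n ℝ}
    (hM : M.IsHermitian) : ∀ᶠ δ in 𝓝 (0 : ℝ), ∀ i ∈ s, (A i - δ • M).PosDef := by
  refine (eventually_all_finset _).2 fun i hi => ?_
  have hlim : Tendsto (fun δ : ℝ => A i - δ • M) (𝓝 0) (𝓝 (A i)) := by
    simpa using tendsto_const_nhds.sub ((tendsto_id (x := 𝓝 (0 : ℝ))).smul_const M)
  exact (hlim.eventually (hA i hi).eventually_posDef).mono fun δ h =>
    h ((hA i hi).isHermitian.sub (hM.smul (IsSelfAdjoint.all δ)))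

theorem Matrix.trace_transpose_mul_self_nonpos_iff {m n : Type*} [Fintype m] [Fintype n]
    {M : Matrix m n ℝ} : (Mᵀ * M).trace ≤ 0 ↔ M = 0 := by
  rw [← conjTranspose_eq_transpose_of_trivial, ← trace_conjTranspose_mul_self_eq_zero_iff,
    le_antisymm_iff, and_iff_left (posSemidef_conjTranspose_mul_self M).trace_nonneg]

section LeastSquaresLoss

variable {n R : Type*} [Fintype n] [CommRing R]

/-- The data-fit term of `gflsl`; it equals `‖Θ - S‖_F² - ‖S‖_F²`. -/
def lsLoss (S Θ : Matrix n n R) : R := (Θᵀ * Θ - Sᵀ * Θ - Θᵀ * S).trace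

theorem lsLoss_add (S Θ D : Matrix n n R) :
    lsLoss S (Θ + D) = lsLoss S Θ + (Dᵀ * D).trace + 2 * (Dᵀ * (Θ - S)).trace := by
  have hΘ : (Θᵀ * D).trace = (Dᵀ * Θ).trace := by
    rw [← trace_transpose, transpose_mul, transpose_transpose]
  have hS : (Sᵀ * D).trace = (Dᵀ * S).trace := by
    rw [← trace_transpose, transpose_mul, transpose_transpose]
  simp only [lsLoss, transpose_add, add_mul, mul_add, mul_sub, trace_add, trace_sub]
  linear_combination hΘ - hS

end LeastSquaresLoss

theorem gflsl_add_const (p T : ℕ) (X : ℕ → Fin p → ℝ) (lam : ℝ)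
    (Θ : ℕ → Matrix (Fin p) (Fin p) ℝ) (D : Matrix (Fin p) (Fin p) ℝ) :
    gflsl p T X lam (fun t => Θ t + D) = gflsl p T X lam Θ + 1 / (2 * T) *
      (T * (Dᵀ * D).trace + 2 * (Dᵀ * ∑ t ∈ Icc 1 T, (Θ t - vecMulVec (X t) (X t))).trace) := by
  have hfit : ∀ t ∈ Icc 1 T, lsLoss (vecMulVec (X t) (X t)) (Θ t + D) =
      lsLoss (vecMulVec (X t) (X t)) (Θ t) + (Dᵀ * D).trace
        + 2 * (Dᵀ * (Θ t - vecMulVec (X t) (X t))).trace := fun t _ => lsLoss_add _ _ _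
  simp only [gflsl, add_sub_add_right_eq_sub]
  change 1 / (2 * (T : ℝ)) * ∑ t ∈ Icc 1 T, lsLoss _ _ + _ =
    1 / (2 * (T : ℝ)) * ∑ t ∈ Icc 1 T, lsLoss _ _ + _ + _
  rw [sum_congr rfl hfit, sum_add_distrib, sum_add_distrib, sum_const, Nat.card_Icc,
    ← mul_sum, ← trace_sum, ← mul_sum]
  simp only [nsmul_eq_mul, Nat.add_sub_cancel]
  ring

theorem gflsl_sub_smul_residual (p T : ℕ) (X : ℕ → Fin p → ℝ) (lam : ℝ)
    (Θ : ℕ → Matrix (Fin p) (Fin p) ℝ) (δ : ℝ) :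
    let M := ∑ t ∈ Icc 1 T, (Θ t - vecMulVec (X t) (X t))
    gflsl p T X lam (fun t => Θ t - δ • M) =
      gflsl p T X lam Θ - δ * (2 - T * δ) / (2 * T) * (Mᵀ * M).trace := by
  intro M
  simp only [sub_eq_add_neg (Θ _), ← neg_smul]
  rw [gflsl_add_const]
  simp only [transpose_smul, smul_mul, Matrix.mul_smul, trace_smul, smul_eq_mul]
  ring

theorem stmt2_general (p T : ℕ) (hT : 1 ≤ T)
    (X : ℕ → Fin p → ℝ) (lam : ℝ)
    (Θhat : ℕ → Matrix (Fin p) (Fin p) ℝ)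
    (hPD : ∀ t ∈ Finset.Icc 1 T, (Θhat t).PosDef)
    (hmin : ∀ Θ : ℕ → Matrix (Fin p) (Fin p) ℝ,
      (∀ t ∈ Finset.Icc 1 T, (Θ t).PosDef) →
      gflsl p T X lam Θhat ≤ gflsl p T X lam Θ) :
    ∑ t ∈ Finset.Icc 1 T, Θhat t
      = ∑ t ∈ Finset.Icc 1 T, Matrix.vecMulVec (X t) (X t) := by
  set M := ∑ t ∈ Icc 1 T, (Θhat t - vecMulVec (X t) (X t)) with hMdef
  suffices hM0 : M = 0 by rwa [hMdef, sum_sub_distrib, sub_eq_zero] at hM0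
  have hM : M.IsHermitian := isSelfAdjoint_sum _ fun t ht =>
    (hPD t ht).isHermitian.sub (by simp [IsHermitian, transpose_vecMulVec])
  have hT0 : (0 : ℝ) < T := by exact_mod_cast hT
  obtain ⟨δ, hδ, hδPD⟩ : ∃ δ ∈ Set.Ioo 0 (2 / (T : ℝ)),
      ∀ t ∈ Icc 1 T, (Θhat t - δ • M).PosDef :=
    Eventually.exists <| Eventually.and
      (Ioo_mem_nhdsGT (by positivity) : ∀ᶠ δ in 𝓝[>] (0 : ℝ), δ ∈ Set.Ioo 0 (2 / (T : ℝ)))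
      (nhdsWithin_le_nhds (eventually_forall_posDef_sub_smul hPD hM))
  have hdescent : 0 < δ * (2 - T * δ) / (2 * T) := by
    have := hδ.2
    rw [lt_div_iff₀ hT0] at this
    exact div_pos (mul_pos hδ.1 (by linarith)) (by positivity)
  have hle := hmin _ hδPD
  rw [gflsl_sub_smul_residual] at hle
  exact trace_transpose_mul_self_nonpos_iff.1 <|
    nonpos_of_mul_nonpos_right (by linarith) hdescent

/-- any minimizer of the GFlsL objective over positive definite tuples
preserves the aggregate sample second moment. -/
theorem stmt2 (p T : ℕ) (hp : 1 ≤ p) (hT : 1 ≤ T)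
    (X : ℕ → Fin p → ℝ) (lam : ℝ) (hlam : 0 < lam)
    (Θhat : ℕ → Matrix (Fin p) (Fin p) ℝ)
    (hPD : ∀ t ∈ Finset.Icc 1 T, (Θhat t).PosDef)
    (hmin : ∀ Θ : ℕ → Matrix (Fin p) (Fin p) ℝ,
      (∀ t ∈ Finset.Icc 1 T, (Θ t).PosDef) →
      gflsl p T X lam Θhat ≤ gflsl p T X lam Θ) :
    ∑ t ∈ Finset.Icc 1 T, Θhat t
      = ∑ t ∈ Finset.Icc 1 T, Matrix.vecMulVec (X t) (X t) :=
  stmt2_general p T hT X lam Θhat hPD hmin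
end

section
/- Suppose (Θ̂₁,…,Θ̂_T) is a tuple of positive definite p×p real matrices that minimizes the GFlsL objective G over all tuples of positive definite p×p real matrices. Then for all integers s, t with 1 ≤ s < t ≤ T+1, ‖(1/T)·∑_{r=s}^{t−1} (Θ̂_r − X_r X_rᵀ)‖_F ≤ 2λ. -/
open Matrix Finset

/-!
Let `M` be the normalized residual sum over the block `s ≤ r < t`. Replacing `Θ̂_r` by
`Θ̂_r - ε M` on that block keeps every matrix positive definite for small `ε > 0`, lowers the
least-squares term by `ε ‖M‖² - O(ε²)`, and raises the fused penalty by at most `2 λ ε ‖M‖`, since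
only the two jumps at the ends of the block move. Minimality thus gives `‖M‖² ≤ 2 λ ‖M‖`.
-/

open Filter Topology

attribute [local instance] Matrix.frobeniusNormedAddCommGroup Matrix.frobeniusNormedSpace

lemma frob_eq_norm {p : ℕ} (A : Matrix (Fin p) (Fin p) ℝ) : frob A = ‖A‖ := by
  simp [frob, Matrix.frobenius_norm_def, Real.sqrt_eq_rpow]

namespace Matrix

variable {n : Type*} [Fintype n]

lemma trace_transpose_mul_comm (A B : Matrix n n ℝ) : (Aᵀ * B).trace = (Bᵀ * A).trace := by
  rw [← trace_transpose, transpose_mul, transpose_transpose]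

lemma trace_transpose_mul_self (A : Matrix n n ℝ) : (Aᵀ * A).trace = ‖A‖ ^ 2 := by
  rw [frobenius_norm_def, ← Real.sqrt_eq_rpow, Real.sq_sqrt (by positivity), Finset.sum_comm]
  simp [trace, mul_apply, sq]

lemma trace_quad_sub (A S N : Matrix n n ℝ) :
    ((A - N)ᵀ * (A - N) - Sᵀ * (A - N) - (A - N)ᵀ * S).trace
      = (Aᵀ * A - Sᵀ * A - Aᵀ * S).trace - 2 * (Nᵀ * (A - S)).trace + (Nᵀ * N).trace := by
  have hA := trace_transpose_mul_comm A N
  have hS := trace_transpose_mul_comm S N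
  simp only [transpose_sub, sub_mul, mul_sub, trace_sub]
  linarith

lemma posDef_of_forall_mem_sphere {B : Matrix n n ℝ} (hB : B.IsHermitian)
    (hpos : ∀ y ∈ Metric.sphere (0 : n → ℝ) 1, 0 < y ⬝ᵥ B *ᵥ y) : B.PosDef := by
  refine PosDef.of_dotProduct_mulVec_pos hB fun x hx => ?_
  have hx' : 0 < ‖x‖ := norm_pos_iff.mpr hx
  have hy := hpos (‖x‖⁻¹ • x) (by simp [norm_smul, hx'.ne'])
  rw [mulVec_smul, dotProduct_smul, smul_dotProduct, smul_eq_mul, smul_eq_mul] at hy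
  rw [star_trivial]
  exact pos_of_mul_pos_right (pos_of_mul_pos_right hy (by positivity)) (by positivity)

lemma PosDef.eventually_sub_smul {A M : Matrix n n ℝ} (hA : A.PosDef) (hM : M.IsHermitian) :
    ∀ᶠ ε in 𝓝 (0 : ℝ), (A - ε • M).PosDef := by
  have hcont : Continuous fun z : ℝ × (n → ℝ) => z.2 ⬝ᵥ (A - z.1 • M) *ᵥ z.2 := by fun_prop
  have hsphere : ∀ᶠ ε in 𝓝 (0 : ℝ), ∀ y ∈ Metric.sphere (0 : n → ℝ) 1,
      0 < y ⬝ᵥ (A - ε • M) *ᵥ y := by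
    refine (isCompact_sphere 0 1).eventually_forall_of_forall_eventually fun y hy => ?_
    refine hcont.continuousAt.eventually (lt_mem_nhds ?_)
    have hy0 : y ≠ 0 := ne_zero_of_mem_unit_sphere ⟨y, hy⟩
    simpa using hA.dotProduct_mulVec_pos hy0
  filter_upwards [hsphere] with ε hε
  exact posDef_of_forall_mem_sphere (hA.1.sub (hM.smul (IsSelfAdjoint.all ε))) hε

end Matrix

section Piecewise

variable {E : Type*} [SeminormedAddCommGroup E]

lemma norm_piecewise_sub_le (a b t : ℕ) (Θ : ℕ → E) (N : E) :
    ‖(Icc a b).piecewise (fun r => Θ r - N) Θ t - (Icc a b).piecewise (fun r => Θ r - N) Θ (t - 1)‖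
      ≤ ‖Θ t - Θ (t - 1)‖ + ((if t = a then ‖N‖ else 0) + (if t = b + 1 then ‖N‖ else 0)) := by
  have hN := norm_nonneg N
  by_cases ht : t ∈ Icc a b <;> by_cases ht' : t - 1 ∈ Icc a b <;>
    simp only [piecewise_eq_of_mem, piecewise_eq_of_notMem, ht, ht', not_false_eq_true] <;>
    rw [mem_Icc] at ht ht'
  · rw [sub_sub_sub_cancel_right, le_add_iff_nonneg_right]
    positivity
  · rw [if_pos (by omega), if_neg (by omega), add_zero, sub_right_comm]
    exact norm_sub_le _ _
  · rw [if_neg (by omega), if_pos (by omega), zero_add, sub_sub_eq_add_sub, add_sub_right_comm]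
    exact norm_add_le _ _
  · rw [le_add_iff_nonneg_right]
    positivity

lemma sum_norm_piecewise_sub_le (s : Finset ℕ) (a b : ℕ) (Θ : ℕ → E) (N : E) :
    ∑ t ∈ s, ‖(Icc a b).piecewise (fun r => Θ r - N) Θ t
        - (Icc a b).piecewise (fun r => Θ r - N) Θ (t - 1)‖
      ≤ ∑ t ∈ s, ‖Θ t - Θ (t - 1)‖ + 2 * ‖N‖ := by
  have hN := norm_nonneg N
  have hpoint (c : ℕ) : ∑ t ∈ s, (if t = c then ‖N‖ else 0) ≤ ‖N‖ := by
    rw [sum_ite_eq']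
    split_ifs <;> simp [hN]
  calc _ ≤ ∑ t ∈ s, (‖Θ t - Θ (t - 1)‖
          + ((if t = a then ‖N‖ else 0) + (if t = b + 1 then ‖N‖ else 0))) :=
        sum_le_sum fun t _ => norm_piecewise_sub_le a b t Θ N
    _ ≤ _ := by
        rw [sum_add_distrib, sum_add_distrib]
        linarith [hpoint a, hpoint (b + 1)]

end Piecewise

lemma sum_trace_quad_piecewise {n : Type*} [Fintype n] {I U : Finset ℕ} (hIU : I ⊆ U)
    (Θ S : ℕ → Matrix n n ℝ) (N : Matrix n n ℝ) :
    ∑ t ∈ U, ((I.piecewise (fun r => Θ r - N) Θ t)ᵀ * I.piecewise (fun r => Θ r - N) Θ t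
        - (S t)ᵀ * I.piecewise (fun r => Θ r - N) Θ t
        - (I.piecewise (fun r => Θ r - N) Θ t)ᵀ * S t).trace
      = ∑ t ∈ U, ((Θ t)ᵀ * Θ t - (S t)ᵀ * Θ t - (Θ t)ᵀ * S t).trace
        - 2 * (Nᵀ * ∑ r ∈ I, (Θ r - S r)).trace + #I * ‖N‖ ^ 2 := by
  have hterm (t : ℕ) : ((I.piecewise (fun r => Θ r - N) Θ t)ᵀ * I.piecewise (fun r => Θ r - N) Θ t
        - (S t)ᵀ * I.piecewise (fun r => Θ r - N) Θ t
        - (I.piecewise (fun r => Θ r - N) Θ t)ᵀ * S t).trace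
      = ((Θ t)ᵀ * Θ t - (S t)ᵀ * Θ t - (Θ t)ᵀ * S t).trace
        + if t ∈ I then ‖N‖ ^ 2 - 2 * (Nᵀ * (Θ t - S t)).trace else 0 := by
    by_cases ht : t ∈ I
    · rw [piecewise_eq_of_mem _ _ _ ht, if_pos ht, Matrix.trace_quad_sub,
        Matrix.trace_transpose_mul_self]
      ring
    · rw [piecewise_eq_of_notMem _ _ _ ht, if_neg ht, add_zero]
  rw [Matrix.mul_sum, trace_sum, sum_congr rfl fun t _ => hterm t, sum_add_distrib, sum_ite_mem,
    inter_eq_right.mpr hIU, sum_sub_distrib, sum_const, nsmul_eq_mul, ← mul_sum]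
  ring

lemma gflsl_piecewise_le {p T : ℕ} {X : ℕ → Fin p → ℝ} {lam : ℝ} (hlam : 0 ≤ lam) {a b : ℕ}
    (hI : Icc a b ⊆ Icc 1 T) (Θ : ℕ → Matrix (Fin p) (Fin p) ℝ) (N : Matrix (Fin p) (Fin p) ℝ) :
    gflsl p T X lam ((Icc a b).piecewise (fun r => Θ r - N) Θ)
      ≤ gflsl p T X lam Θ - (Nᵀ * ∑ r ∈ Icc a b, (Θ r - vecMulVec (X r) (X r))).trace / T
        + #(Icc a b) / (2 * T) * ‖N‖ ^ 2 + 2 * lam * ‖N‖ := by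
  have hTV := mul_le_mul_of_nonneg_left
    (sum_norm_piecewise_sub_le (Icc 2 T) a b Θ N) hlam
  simp only [gflsl, frob_eq_norm, sum_trace_quad_piecewise hI]
  linear_combination hTV

lemma le_of_eventually_le_mul_add {x y c : ℝ} (h : ∀ᶠ ε in 𝓝[>] (0 : ℝ), x ≤ ε * c + y) :
    x ≤ y := by
  have hlim : Tendsto (fun ε : ℝ => ε * c + y) (𝓝[>] 0) (𝓝 y) := by
    refine (((continuous_mul_const c).add continuous_const).tendsto' 0 y ?_).mono_left
      nhdsWithin_le_nhds
    simp
  exact ge_of_tendsto hlim h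

theorem stmt3_general (p T : ℕ)
    (X : ℕ → Fin p → ℝ) (lam : ℝ) (hlam : 0 < lam)
    (Θhat : ℕ → Matrix (Fin p) (Fin p) ℝ)
    (hPD : ∀ t ∈ Finset.Icc 1 T, (Θhat t).PosDef)
    (hmin : ∀ Θ : ℕ → Matrix (Fin p) (Fin p) ℝ,
      (∀ t ∈ Finset.Icc 1 T, (Θ t).PosDef) →
      gflsl p T X lam Θhat ≤ gflsl p T X lam Θ) :
    ∀ s t : ℕ, 1 ≤ s → s < t → t ≤ T + 1 →
      frob ((1 / (T : ℝ)) • ∑ r ∈ Finset.Icc s (t - 1),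
          (Θhat r - Matrix.vecMulVec (X r) (X r))) ≤ 2 * lam := by
  intro a b ha hab hb
  have hIT : Icc a (b - 1) ⊆ Icc 1 T := fun r hr => by simp only [mem_Icc] at hr ⊢; omega
  have hT : (0 : ℝ) < T := by exact_mod_cast (by omega : 0 < T)
  set M := (1 / (T : ℝ)) • ∑ r ∈ Icc a (b - 1), (Θhat r - vecMulVec (X r) (X r)) with hM
  have hsum : ∑ r ∈ Icc a (b - 1), (Θhat r - vecMulVec (X r) (X r)) = (T : ℝ) • M := by
    rw [hM, smul_smul, mul_one_div_cancel hT.ne', one_smul]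
  have hMherm : M.IsHermitian := by
    refine IsHermitian.smul ?_ (IsSelfAdjoint.all _)
    refine isSelfAdjoint_sum _ fun r hr => ((hPD r (hIT hr)).1.sub ?_).isSelfAdjoint
    simpa using (posSemidef_vecMulVec_self_star (X r)).1
  clear_value M
  have hPDε : ∀ᶠ ε in 𝓝[>] (0 : ℝ),
      ∀ r ∈ Icc 1 T, ((Icc a (b - 1)).piecewise (fun r => Θhat r - ε • M) Θhat r).PosDef := by
    refine nhdsWithin_le_nhds ((eventually_all_finset _).2 fun r hr => ?_)
    by_cases hrI : r ∈ Icc a (b - 1)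
    · simpa [piecewise_eq_of_mem _ _ _ hrI] using (hPD r hr).eventually_sub_smul hMherm
    · simp [piecewise_eq_of_notMem _ _ _ hrI, hPD r hr]
  have key : ∀ᶠ ε in 𝓝[>] (0 : ℝ),
      ‖M‖ ^ 2 ≤ ε * (#(Icc a (b - 1)) / (2 * T) * ‖M‖ ^ 2) + 2 * lam * ‖M‖ := by
    filter_upwards [hPDε, self_mem_nhdsWithin] with ε hε (hεpos : 0 < ε)
    have h := (hmin _ hε).trans (gflsl_piecewise_le hlam.le hIT Θhat (ε • M))
    rw [hsum, transpose_smul, smul_mul_smul_comm, trace_smul, trace_transpose_mul_self,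
      norm_smul, Real.norm_of_nonneg hεpos.le] at h
    rw [smul_eq_mul, mul_right_comm, mul_div_cancel_right₀ _ hT.ne'] at h
    refine le_of_mul_le_mul_left ?_ hεpos
    linear_combination h
  have hsq : ‖M‖ ^ 2 ≤ 2 * lam * ‖M‖ := by simpa using le_of_eventually_le_mul_add key
  rw [frob_eq_norm]
  nlinarith [norm_nonneg M]

/-- for any minimizer of the GFlsL objective over positive definite tuples,
the normalized partial residual sums are bounded by `2λ` in Frobenius norm. -/
theorem stmt3 (p T : ℕ) (hp : 1 ≤ p) (hT : 1 ≤ T)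
    (X : ℕ → Fin p → ℝ) (lam : ℝ) (hlam : 0 < lam)
    (Θhat : ℕ → Matrix (Fin p) (Fin p) ℝ)
    (hPD : ∀ t ∈ Finset.Icc 1 T, (Θhat t).PosDef)
    (hmin : ∀ Θ : ℕ → Matrix (Fin p) (Fin p) ℝ,
      (∀ t ∈ Finset.Icc 1 T, (Θ t).PosDef) →
      gflsl p T X lam Θhat ≤ gflsl p T X lam Θ) :
    ∀ s t : ℕ, 1 ≤ s → s < t → t ≤ T + 1 →
      frob ((1 / (T : ℝ)) • ∑ r ∈ Finset.Icc s (t - 1),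
          (Θhat r - Matrix.vecMulVec (X r) (X r))) ≤ 2 * lam :=
  stmt3_general p T X lam hlam Θhat hPD hmin
end

section
/- Let A be a p×p real symmetric matrix and ε ∈ ℝ. Write the spectral decomposition A = ∑_{i=1}^{p} d_i·u_i u_iᵀ, where u_1,…,u_p is an orthonormal basis of ℝ^p consisting of eigenvectors of A with corresponding real eigenvalues d_1,…,d_p. Define S* = ∑_{i=1}^{p} max(d_i, ε)·u_i u_iᵀ. Then S* is symmetric, S* − ε·I_p is positive semidefinite, and for every p×p real symmetric matrix S with S − ε·I_p positive semidefinite, ‖S* − A‖_F ≤ ‖S − A‖_F; that is, S* is a Frobenius-norm projection of A onto the set {S symmetric : S − ε·I_p PSD}. -/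
/-!
In the orthonormal eigenbasis `u`, the squared Frobenius norm of any `M` is
`∑ᵢⱼ (uᵢ ⬝ M uⱼ)²`. For `S* - A` this matrix of coefficients is diagonal with entries
`max dᵢ ε - dᵢ`. For a feasible `S` the diagonal entries of `S - A` are `uᵢ ⬝ S uᵢ - dᵢ` with
`uᵢ ⬝ S uᵢ ≥ ε`, and `(max d ε - d)² ≤ (s - d)²` whenever `ε ≤ s`; dropping the off-diagonal
terms of `S - A` only decreases its norm.
-/

open Matrix

theorem sq_max_sub_le_sq_sub {R : Type*} [Ring R] [LinearOrder R] [IsStrictOrderedRing R]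
    {ε s : R} (d : R) (h : ε ≤ s) : (max d ε - d) ^ 2 ≤ (s - d) ^ 2 := by
  rcases le_total ε d with hd | hd
  · simpa [max_eq_left hd] using sq_nonneg (s - d)
  · rw [max_eq_right hd]
    exact pow_le_pow_left₀ (sub_nonneg.2 hd) (sub_le_sub_right h d) 2

namespace Matrix

variable {n R : Type*} [Fintype n]

theorem isSymm_sum_smul_vecMulVec_self [CommRing R] (u : n → n → R) (c : n → R) :
    (∑ i, c i • vecMulVec (u i) (u i)).IsSymm := by
  simp [IsSymm, transpose_sum, transpose_vecMulVec]

variable [DecidableEq n]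

theorem le_dotProduct_mulVec_of_posSemidef_sub_smul_one {S : Matrix n n ℝ} {ε : ℝ}
    (hS : (S - ε • 1).PosSemidef) {x : n → ℝ} (hx : x ⬝ᵥ x = 1) :
    ε ≤ x ⬝ᵥ (S *ᵥ x) := by
  have := hS.dotProduct_mulVec_nonneg x
  rw [star_trivial, sub_mulVec, smul_mulVec, one_mulVec, dotProduct_sub, dotProduct_smul, hx,
    smul_eq_mul, mul_one] at this
  linarith

section Orthonormal

variable [CommRing R] {u : n → n → R} (hu : ∀ i j, u i ⬝ᵥ u j = if i = j then 1 else 0)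
include hu

theorem sum_vecMulVec_self_eq_one : ∑ i, vecMulVec (u i) (u i) = 1 := by
  have hU : of u * (of u)ᵀ = 1 := by
    ext i j
    simpa [mul_apply, dotProduct, one_apply] using hu i j
  have hUt : (of u)ᵀ * of u = 1 := mul_eq_one_comm.mp hU
  ext a b
  simpa [mul_apply, sum_apply, vecMulVec_apply] using congr_fun₂ hUt a b

theorem sum_smul_vecMulVec_self_mulVec (c : n → R) (j : n) :
    (∑ i, c i • vecMulVec (u i) (u i)) *ᵥ u j = c j • u j := by
  simp [sum_mulVec, smul_mulVec, vecMulVec_mulVec, hu]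

theorem sum_sq_dotProduct_eq_dotProduct_self (x : n → R) :
    ∑ i, (u i ⬝ᵥ x) ^ 2 = x ⬝ᵥ x := by
  calc ∑ i, (u i ⬝ᵥ x) ^ 2 = x ⬝ᵥ ((∑ i, vecMulVec (u i) (u i)) *ᵥ x) := by
        simp [sum_mulVec, vecMulVec_mulVec, sum_dotProduct, dotProduct_comm x, sq]
    _ = x ⬝ᵥ x := by rw [sum_vecMulVec_self_eq_one hu, one_mulVec]

theorem sum_sq_apply_eq_sum_sq_dotProduct_mulVec (M : Matrix n n R) :
    ∑ a, ∑ b, M a b ^ 2 = ∑ i, ∑ j, (u i ⬝ᵥ (M *ᵥ u j)) ^ 2 := by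
  calc ∑ a, ∑ b, M a b ^ 2 = ∑ a, ∑ j, (u j ⬝ᵥ M a) ^ 2 := by
        refine Finset.sum_congr rfl fun a _ => ?_
        rw [sum_sq_dotProduct_eq_dotProduct_self hu]
        simp only [dotProduct, sq]
    _ = ∑ j, (M *ᵥ u j) ⬝ᵥ (M *ᵥ u j) := by
        rw [Finset.sum_comm]
        refine Finset.sum_congr rfl fun j _ => ?_
        simp only [dotProduct_comm (u j), sq]
        rfl
    _ = ∑ i, ∑ j, (u i ⬝ᵥ (M *ᵥ u j)) ^ 2 := by
        rw [Finset.sum_comm]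
        simp only [sum_sq_dotProduct_eq_dotProduct_self hu]

theorem sum_sq_apply_of_mulVec_eq_smul {M : Matrix n n R} {e : n → R}
    (hM : ∀ j, M *ᵥ u j = e j • u j) : ∑ a, ∑ b, M a b ^ 2 = ∑ i, e i ^ 2 := by
  simp [sum_sq_apply_eq_sum_sq_dotProduct_mulVec hu, hM, hu]

end Orthonormal

theorem sum_sq_dotProduct_mulVec_self_le {u : n → n → ℝ}
    (hu : ∀ i j, u i ⬝ᵥ u j = if i = j then 1 else 0) (M : Matrix n n ℝ) :
    ∑ i, (u i ⬝ᵥ (M *ᵥ u i)) ^ 2 ≤ ∑ a, ∑ b, M a b ^ 2 := by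
  rw [sum_sq_apply_eq_sum_sq_dotProduct_mulVec hu]
  exact Finset.sum_le_sum fun i _ =>
    Finset.single_le_sum (f := fun j => (u i ⬝ᵥ (M *ᵥ u j)) ^ 2) (fun j _ => sq_nonneg _)
      (Finset.mem_univ i)

end Matrix

theorem stmt16_general (p : ℕ) (ε : ℝ)
    (A : Matrix (Fin p) (Fin p) ℝ)
    (u : Fin p → (Fin p → ℝ)) (d : Fin p → ℝ)
    (horth : ∀ i j : Fin p, u i ⬝ᵥ u j = if i = j then (1 : ℝ) else 0)
    (heig : ∀ i : Fin p, A.mulVec (u i) = d i • u i) :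
    (∑ i, max (d i) ε • Matrix.vecMulVec (u i) (u i)).IsSymm ∧
    ((∑ i, max (d i) ε • Matrix.vecMulVec (u i) (u i)) - ε • 1).PosSemidef ∧
    (∀ S : Matrix (Fin p) (Fin p) ℝ, S.IsSymm → (S - ε • 1).PosSemidef →
      frob ((∑ i, max (d i) ε • Matrix.vecMulVec (u i) (u i)) - A)
        ≤ frob (S - A)) := by
  have hshift : (∑ i, max (d i) ε • vecMulVec (u i) (u i)) - ε • 1
      = ∑ i, (max (d i) ε - ε) • vecMulVec (u i) (u i) := by
    simp only [← sum_vecMulVec_self_eq_one horth, Finset.smul_sum, ← Finset.sum_sub_distrib,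
      sub_smul]
  refine ⟨isSymm_sum_smul_vecMulVec_self u _, ?_, fun S _ hS => ?_⟩
  · rw [hshift]
    exact posSemidef_sum _ fun i _ =>
      (posSemidef_vecMulVec_self_star (u i)).smul (sub_nonneg.2 (le_max_right _ _))
  · have hres : ∀ j, ((∑ i, max (d i) ε • vecMulVec (u i) (u i)) - A) *ᵥ u j
        = (max (d j) ε - d j) • u j := fun j => by
      rw [sub_mulVec, sum_smul_vecMulVec_self_mulVec horth, heig, sub_smul]
    refine Real.sqrt_le_sqrt ?_
    calc ∑ a, ∑ b, ((∑ i, max (d i) ε • vecMulVec (u i) (u i)) - A) a b ^ 2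
        = ∑ i, (max (d i) ε - d i) ^ 2 := sum_sq_apply_of_mulVec_eq_smul horth hres
      _ ≤ ∑ i, (u i ⬝ᵥ ((S - A) *ᵥ u i)) ^ 2 := Finset.sum_le_sum fun i _ => by
        have hui : u i ⬝ᵥ u i = 1 := by simpa using horth i i
        rw [sub_mulVec, heig, dotProduct_sub, dotProduct_smul, hui, smul_eq_mul, mul_one]
        exact sq_max_sub_le_sq_sub _ (le_dotProduct_mulVec_of_posSemidef_sub_smul_one hS hui)
      _ ≤ ∑ a, ∑ b, (S - A) a b ^ 2 := sum_sq_dotProduct_mulVec_self_le horth _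

/-- eigenvalue thresholding gives a Frobenius-norm projection onto
`{S symmetric : S − ε•I PSD}`. Given the spectral decomposition
`A = ∑ dᵢ • uᵢuᵢᵀ` of a symmetric matrix `A` with an orthonormal eigenbasis `u`,
the matrix `S* = ∑ max(dᵢ, ε) • uᵢuᵢᵀ` is symmetric, satisfies `S* − ε•I ⪰ 0`,
and minimizes `‖S − A‖_F` over all feasible `S`. -/
theorem stmt16 (p : ℕ) (hp : 1 ≤ p) (ε : ℝ)
    (A : Matrix (Fin p) (Fin p) ℝ) (hA : A.IsSymm)
    (u : Fin p → (Fin p → ℝ)) (d : Fin p → ℝ)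
    (horth : ∀ i j : Fin p, u i ⬝ᵥ u j = if i = j then (1 : ℝ) else 0)
    (heig : ∀ i : Fin p, A.mulVec (u i) = d i • u i)
    (hdecomp : A = ∑ i, d i • Matrix.vecMulVec (u i) (u i)) :
    (∑ i, max (d i) ε • Matrix.vecMulVec (u i) (u i)).IsSymm ∧
    ((∑ i, max (d i) ε • Matrix.vecMulVec (u i) (u i)) - ε • 1).PosSemidef ∧
    (∀ S : Matrix (Fin p) (Fin p) ℝ, S.IsSymm → (S - ε • 1).PosSemidef →
      frob ((∑ i, max (d i) ε • Matrix.vecMulVec (u i) (u i)) - A)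
        ≤ frob (S - A)) :=
  stmt16_general p ε A u d horth heig
end
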